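/- Let M be a positive real number, p real with 0 ≤ p < 1, and k, d, i integers with 2 ≤ k ≤ d and 1 ≤ i ≤ k−1. Define f(i) = 2·M·d/((2k−i−1)·i + 2k·(d−k+1)) and g(i) = (2d−2k+i+1)·i/(2d). Suppose γ' is a real number with f(i)/(1−p) ≤ γ' < f(i−1)/(1−p), and set β' = γ'/d and α = (M − g(i)·(1−p)·γ')/(k−i). Then ∑_{j=0}^{k−1} min{α, (d−j)·(1−p)·β'} = M. -/

import Mathlib

/-!
With `c = (1 - p) β'` the `j`-th capacity term is `(d - j) c`, decreasing in `j`. The two bounds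
on `γ'` say exactly that `α` lies between the terms with indices `k - i` and `k - i - 1`, so the
minimum is `α` for the first `k - i` nodes and `(d - j) c` for the last `i`. The choice of `α`
makes `(k - i) α` plus the arithmetic sum of those last `i` terms equal to `M`.
-/

open Finset

theorem sum_range_min_eq_of_threshold {M : Type*} [AddCommMonoid M] [LinearOrder M]
    {a : M} {t : ℕ → M} {m n : ℕ} (hmn : m ≤ n) (hlt : ∀ j < m, a ≤ t j)
    (hge : ∀ j, m ≤ j → t j ≤ a) :
    ∑ j ∈ range n, min a (t j) = m • a + ∑ j ∈ Ico m n, t j := by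
  rw [← sum_range_add_sum_Ico _ hmn]
  congr 1
  · rw [sum_congr rfl fun j hj => min_eq_left (hlt j (mem_range.mp hj)), sum_const, card_range]
  · exact sum_congr rfl fun j hj => min_eq_right (hge j (mem_Ico.mp hj).1)

theorem sum_Ico_sub_natCast (c : ℝ) {i k : ℕ} (hik : i ≤ k) :
    ∑ j ∈ Ico (k - i) k, (c - j) = i * (2 * c - 2 * k + i + 1) / 2 := by
  induction i with
  | zero => simp
  | succ i ih =>
    rw [sum_eq_sum_Ico_succ_bot (by omega), show k - (i + 1) + 1 = k - i by omega, ih (by omega),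
      Nat.cast_sub hik]
    push_cast
    ring

theorem sum_range_min_eq_of_storage_bounds {k i : ℕ} {d M c α : ℝ} (hik : i < k) (hc : 0 ≤ c)
    (hα : α * (k - i) = M - (2 * d - 2 * k + i + 1) * i / 2 * c)
    (hlo : α ≤ (d - (k - i - 1)) * c) (hhi : (d - (k - i)) * c ≤ α) :
    ∑ j ∈ range k, min α ((d - j) * c) = M := by
  have hcast : ((k - i : ℕ) : ℝ) = k - i := Nat.cast_sub hik.le
  have hterm_anti : Antitone fun j : ℕ => (d - j) * c := fun j j' hjj' => by
    have : (j : ℝ) ≤ j' := by exact_mod_cast hjj'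
    dsimp only
    nlinarith
  rw [sum_range_min_eq_of_threshold (m := k - i) (Nat.sub_le k i)]
  · rw [← sum_mul, sum_Ico_sub_natCast d hik.le, nsmul_eq_mul, hcast]
    linarith
  · intro j hj
    calc α ≤ (d - (k - i - 1)) * c := hlo
      _ = (d - ((k - i - 1 : ℕ) : ℝ)) * c := by
        rw [Nat.cast_sub (by omega), hcast, Nat.cast_one]
      _ ≤ (d - j) * c := hterm_anti (Nat.le_sub_one_of_lt hj)
  · intro j hj
    calc (d - j) * c ≤ (d - ((k - i : ℕ) : ℝ)) * c := hterm_anti hj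
      _ = (d - (k - i)) * c := by rw [hcast]
      _ ≤ α := hhi

-- The paper's `f j` is `2 M d / tradeoffDenom k d j`.
def tradeoffDenom (k d x : ℝ) : ℝ := (2 * k - x - 1) * x + 2 * k * (d - k + 1)

theorem tradeoffDenom_pos {k d x : ℝ} (hkd : k ≤ d) (hx : 0 ≤ x) (hxk : x + 1 ≤ k) :
    0 < tradeoffDenom k d x := by
  unfold tradeoffDenom
  nlinarith [mul_nonneg (by linarith : (0 : ℝ) ≤ 2 * k - x - 1) hx]

theorem tradeoffDenom_sub_tradeoffDenom_sub_one (k d x : ℝ) :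
    tradeoffDenom k d x - tradeoffDenom k d (x - 1) = 2 * (k - x) := by
  unfold tradeoffDenom
  ring

section Thresholds

variable {d M c α : ℝ}

theorem le_sub_sub_one_mul_iff_two_mul_le {k i : ℝ} (hki : 0 < k - i)
    (hα : α * (k - i) = M - (2 * d - 2 * k + i + 1) * i / 2 * c) :
    α ≤ (d - (k - i - 1)) * c ↔ 2 * M ≤ tradeoffDenom k d i * c := by
  rw [← mul_le_mul_iff_of_pos_right hki, hα, tradeoffDenom]
  constructor <;> intro h <;> linarith

theorem sub_mul_le_iff_le_two_mul {k i : ℝ} (hki : 0 < k - i)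
    (hα : α * (k - i) = M - (2 * d - 2 * k + i + 1) * i / 2 * c) :
    (d - (k - i)) * c ≤ α ↔ tradeoffDenom k d (i - 1) * c ≤ 2 * M := by
  rw [← mul_le_mul_iff_of_pos_right hki, hα, tradeoffDenom]
  constructor <;> intro h <;> linarith

theorem sum_range_min_eq_of_tradeoffDenom_bounds {k i : ℕ} (hik : i < k)
    (hα : α * (k - i) = M - (2 * d - 2 * k + i + 1) * i / 2 * c)
    (hlo : 2 * M ≤ tradeoffDenom k d i * c) (hhi : tradeoffDenom k d (i - 1) * c ≤ 2 * M) :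
    ∑ j ∈ range k, min α ((d - j) * c) = M := by
  have hki : (0 : ℝ) < k - i := sub_pos.mpr (by exact_mod_cast hik)
  have hc : 0 ≤ c := by
    have hgap : 0 ≤ (tradeoffDenom k d i - tradeoffDenom k d (i - 1)) * c := by
      rw [sub_mul]; linarith
    rw [tradeoffDenom_sub_tradeoffDenom_sub_one] at hgap
    exact nonneg_of_mul_nonneg_right hgap (by linarith)
  exact sum_range_min_eq_of_storage_bounds hik hc hα
    ((le_sub_sub_one_mul_iff_two_mul_le hki hα).mpr hlo)
    ((sub_mul_le_iff_le_two_mul hki hα).mpr hhi)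

end Thresholds

theorem tradeoff_interior_point_general (M : ℝ)
    (p : ℝ) (hp1 : p < 1)
    (k d i : ℕ) (hkd : k ≤ d) (hi1 : 1 ≤ i) (hi2 : i ≤ k - 1)
    (f : ℕ → ℝ)
    (hf : ∀ j : ℕ, f j =
      2 * M * d / ((2 * (k : ℝ) - j - 1) * j + 2 * (k : ℝ) * ((d : ℝ) - k + 1)))
    (g : ℕ → ℝ)
    (hg : ∀ j : ℕ, g j = (2 * (d : ℝ) - 2 * k + j + 1) * j / (2 * d))
    (γ' : ℝ) (hγ1 : f i / (1 - p) ≤ γ') (hγ2 : γ' < f (i - 1) / (1 - p))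
    (β' α : ℝ) (hβ' : β' = γ' / d)
    (hα : α = (M - g i * (1 - p) * γ') / ((k : ℝ) - i)) :
    ∑ j ∈ Finset.range k, min α (((d : ℝ) - j) * (1 - p) * β') = M := by
  have hik : i < k := by omega
  have hik' : (i : ℝ) + 1 ≤ k := by exact_mod_cast hik
  have hkd' : (k : ℝ) ≤ d := by exact_mod_cast hkd
  have hi1' : (1 : ℝ) ≤ i := by exact_mod_cast hi1
  have hki : (0 : ℝ) < k - i := by linarith
  have hd : (0 : ℝ) < d := by linarith
  have h1p : 0 < 1 - p := by linarith
  have hfD : ∀ j : ℕ, f j = 2 * M * d / tradeoffDenom k d j := hf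
  set c := (1 - p) * β' with hc
  have hγ : γ' = d * c / (1 - p) := by rw [hc, hβ']; field_simp
  have hlo : 2 * M ≤ tradeoffDenom k d i * c := by
    rw [hγ, div_le_div_iff_of_pos_right h1p, hfD,
      div_le_iff₀ (tradeoffDenom_pos hkd' (by linarith) hik')] at hγ1
    nlinarith
  have hhi : tradeoffDenom k d (i - 1) * c < 2 * M := by
    rw [hγ, div_lt_div_iff_of_pos_right h1p, hfD, Nat.cast_sub hi1, Nat.cast_one,
      lt_div_iff₀ (tradeoffDenom_pos hkd' (by linarith) (by linarith))] at hγ2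
    nlinarith
  have hαc : α * (k - i) = M - (2 * d - 2 * k + i + 1) * i / 2 * c := by
    rw [hα, hg, hγ]; field_simp
  simp only [mul_assoc]
  exact sum_range_min_eq_of_tradeoffDenom_bounds hik hαc hlo hhi.le

/-- Interior points of the bandwidth–storage tradeoff in a packet erasure network:
for `1 ≤ i ≤ k−1`, if the repair-bandwidth `γ'` satisfies
`f(i)/(1−p) ≤ γ' < f(i−1)/(1−p)`, then with `β' = γ'/d` and
`α = (M − g(i)(1−p)γ')/(k−i)` the capacity equals the file size:
`∑_{j=0}^{k−1} min{α, (d−j)(1−p)β'} = M`. -/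
theorem tradeoff_interior_point (M : ℝ) (hM : 0 < M)
    (p : ℝ) (hp0 : 0 ≤ p) (hp1 : p < 1)
    (k d i : ℕ) (hk : 2 ≤ k) (hkd : k ≤ d) (hi1 : 1 ≤ i) (hi2 : i ≤ k - 1)
    (f : ℕ → ℝ)
    (hf : ∀ j : ℕ, f j =
      2 * M * d / ((2 * (k : ℝ) - j - 1) * j + 2 * (k : ℝ) * ((d : ℝ) - k + 1)))
    (g : ℕ → ℝ)
    (hg : ∀ j : ℕ, g j = (2 * (d : ℝ) - 2 * k + j + 1) * j / (2 * d))
    (γ' : ℝ) (hγ1 : f i / (1 - p) ≤ γ') (hγ2 : γ' < f (i - 1) / (1 - p))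
    (β' α : ℝ) (hβ' : β' = γ' / d)
    (hα : α = (M - g i * (1 - p) * γ') / ((k : ℝ) - i)) :
    ∑ j ∈ Finset.range k, min α (((d : ℝ) - j) * (1 - p) * β') = M :=
  tradeoff_interior_point_general M p hp1 k d i hkd hi1 hi2 f hf g hg γ' hγ1 hγ2 β' α hβ' hα
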